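/- arXiv:1610.06411 — 7 statements merged into one kernel-verified Lean document; each statement's English description precedes it below -/
import Mathlib

section
/- Let α be a type, let U, V : α → α be functions, and let l ≥ 1 be a natural number. Let P(U∘V, l) = {z ∈ α | (U∘V)^[l](z) = z and the minimal period of z under U∘V equals l} and define P(V∘U, l) analogously. Then V maps P(U∘V, l) bijectively onto P(V∘U, l) (Set.BijOn V P(U∘V,l) P(V∘U,l)). -/
private lemma key_conj {α : Type*} (U V : α → α) {l : ℕ} (hl : 1 ≤ l) {z : α}
    (h1 : (U ∘ V)^[l] z = z) (h2 : Function.minimalPeriod (U ∘ V) z = l) :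
    (V ∘ U)^[l] (V z) = V z ∧ Function.minimalPeriod (V ∘ U) (V z) = l := by
  have hsem : Function.Semiconj V (U ∘ V) (V ∘ U) := fun x => rfl
  have hp1 : (V ∘ U)^[l] (V z) = V z :=
    ((hsem.iterate_right l) z).symm.trans (congrArg V h1)
  obtain ⟨k, hk⟩ : ∃ k, l = k + 1 := ⟨l - 1, (Nat.succ_pred_eq_of_pos hl).symm⟩
  set m := Function.minimalPeriod (V ∘ U) (V z) with hm
  have hml : m ∣ l := Function.IsPeriodicPt.minimalPeriod_dvd hp1
  have h3 : V ((U ∘ V)^[m] z) = V z :=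
    (hsem.iterate_right m z).trans Function.iterate_minimalPeriod
  have hmz : (U ∘ V)^[m] z = z := by
    have h4 : (U ∘ V)^[l] ((U ∘ V)^[m] z) = (U ∘ V)^[m] z := by
      rw [← Function.iterate_add_apply, Nat.add_comm, Function.iterate_add_apply, h1]
    calc (U ∘ V)^[m] z = (U ∘ V)^[l] ((U ∘ V)^[m] z) := h4.symm
      _ = (U ∘ V)^[k] (U (V ((U ∘ V)^[m] z))) := by
          rw [hk, Function.iterate_succ_apply]; rfl
      _ = (U ∘ V)^[k] (U (V z)) := by rw [h3]
      _ = (U ∘ V)^[l] z := by rw [hk, Function.iterate_succ_apply]; rfl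
      _ = z := h1
  have hlm : l ∣ m := h2 ▸ Function.IsPeriodicPt.minimalPeriod_dvd hmz
  exact ⟨hp1, Nat.dvd_antisymm hml hlm⟩

theorem stmt_3 {α : Type*} (U V : α → α) (l : ℕ) (hl : 1 ≤ l) :
    Set.BijOn V
      {z : α | (U ∘ V)^[l] z = z ∧ Function.minimalPeriod (U ∘ V) z = l}
      {z : α | (V ∘ U)^[l] z = z ∧ Function.minimalPeriod (V ∘ U) z = l} := by
  obtain ⟨k, hk⟩ : ∃ k, l = k + 1 := ⟨l - 1, (Nat.succ_pred_eq_of_pos hl).symm⟩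
  refine ⟨fun z hz => key_conj U V hl hz.1 hz.2, ?_, ?_⟩
  · intro z1 h1 z2 h2 hV
    calc z1 = (U ∘ V)^[l] z1 := h1.1.symm
      _ = (U ∘ V)^[k] (U (V z1)) := by rw [hk, Function.iterate_succ_apply]; rfl
      _ = (U ∘ V)^[k] (U (V z2)) := by rw [hV]
      _ = (U ∘ V)^[l] z2 := by rw [hk, Function.iterate_succ_apply]; rfl
      _ = z2 := h2.1
  · intro w hw
    set w' := (V ∘ U)^[k] w with hw'def
    have hper : (V ∘ U)^[l] w' = w' := by
      rw [hw'def, ← Function.iterate_add_apply, Nat.add_comm, Function.iterate_add_apply, hw.1]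
    have hmin : Function.minimalPeriod (V ∘ U) w' = l := by
      rw [hw'def, Function.minimalPeriod_apply_iterate
        (Function.mk_mem_periodicPts hl hw.1), hw.2]
    refine ⟨U w', key_conj V U hl hper hmin, ?_⟩
    show V (U w') = w
    calc V (U w') = (V ∘ U)^[l] w := by rw [hk, Function.iterate_succ_apply']; rfl
      _ = w := hw.1
end

section
/- Define a relation Rel on functions ℂ → ℂ by: Rel A B if and only if there exist differentiable functions U, V : ℂ → ℂ with A = U ∘ V and B = V ∘ U (B is an elementary transformation of A). Suppose A and B are related by the equivalence relation generated by Rel (EqvGen Rel A B). Then for every l ≥ 1 there exists a bijection φ from the set P(A, l) = {z ∈ ℂ | A^[l](z) = z and the minimal period of z under A equals l} onto the analogously defined set P(B, l) such that for every z ∈ P(A, l), deriv (A^[l]) z = deriv (B^[l]) (φ z). In particular, equivalent maps have the same multipliers at corresponding periodic points. -/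
/-!
If `A = U ∘ V` and `B = V ∘ U`, then `V` semiconjugates `A` to `B` and `U` semiconjugates `B`
to `A`. Hence minimal periods are preserved in both directions, and `V` maps the points of
minimal period `l` of `A` bijectively onto those of `B`, with inverse `A^[l-1] ∘ U`. By the
chain rule the multiplier of an `A`-cycle is the product of the values of `U'` and `V'` along
it; for the `B`-cycle of `V z` the same factors appear, those of `V'` shifted by one step
around the cycle. Having corresponding multipliers is an equivalence relation, so it persists
along `EqvGen`.
-/

open Function Set Finset

section PeriodicPoints

variable {α β : Type*}

def ptsOfMinimalPeriod (f : α → α) (l : ℕ) : Set α :=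
  {z | f^[l] z = z ∧ minimalPeriod f z = l}

theorem iterate_mem_ptsOfMinimalPeriod {f : α → α} {l : ℕ} (hl : 0 < l) {x : α}
    (hx : x ∈ ptsOfMinimalPeriod f l) (n : ℕ) : f^[n] x ∈ ptsOfMinimalPeriod f l :=
  ⟨IsPeriodicPt.apply_iterate hx.1 n,
    (minimalPeriod_apply_iterate (mk_mem_periodicPts hl hx.1) n).trans hx.2⟩

theorem semiconj_swap_comp (U : β → α) (V : α → β) : Semiconj V (U ∘ V) (V ∘ U) :=
  fun _ => rfl

variable {U : β → α} {V : α → β}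

theorem minimalPeriod_swap_comp_apply {x : α} (hx : x ∈ periodicPts (U ∘ V)) :
    minimalPeriod (V ∘ U) (V x) = minimalPeriod (U ∘ V) x := by
  apply Nat.dvd_antisymm
  · exact ((isPeriodicPt_minimalPeriod _ x).map (semiconj_swap_comp U V)).minimalPeriod_dvd
  · rw [← minimalPeriod_apply hx]
    exact ((isPeriodicPt_minimalPeriod _ (V x)).map (semiconj_swap_comp V U)).minimalPeriod_dvd

theorem mapsTo_ptsOfMinimalPeriod_swap_comp {l : ℕ} (hl : 0 < l) :
    MapsTo V (ptsOfMinimalPeriod (U ∘ V) l) (ptsOfMinimalPeriod (V ∘ U) l) := fun _ hx =>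
  ⟨IsPeriodicPt.map hx.1 (semiconj_swap_comp U V),
    (minimalPeriod_swap_comp_apply (mk_mem_periodicPts hl hx.1)).trans hx.2⟩

theorem bijOn_ptsOfMinimalPeriod_swap_comp {l : ℕ} (hl : 0 < l) :
    BijOn V (ptsOfMinimalPeriod (U ∘ V) l) (ptsOfMinimalPeriod (V ∘ U) l) := by
  obtain ⟨k, rfl⟩ : ∃ k, l = k + 1 := Nat.exists_eq_add_one.mpr hl
  refine InvOn.bijOn (f' := (U ∘ V)^[k] ∘ U) ⟨fun x hx => hx.1, fun y hy => ?_⟩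
    (mapsTo_ptsOfMinimalPeriod_swap_comp hl) fun y hy =>
      iterate_mem_ptsOfMinimalPeriod hl (mapsTo_ptsOfMinimalPeriod_swap_comp hl hy) k
  exact ((semiconj_swap_comp U V).iterate_right k (U y)).trans hy.1

end PeriodicPoints

theorem Finset.prod_range_shift_eq_of_apply_eq {M : Type*} [CommMonoid M] (g : ℕ → M) {n : ℕ}
    (h : g n = g 0) : ∏ i ∈ range n, g (i + 1) = ∏ i ∈ range n, g i := by
  cases n with
  | zero => rfl
  | succ k => rw [prod_range_succ, h, prod_range_succ']

section Multipliers

variable {𝕜 : Type*} [NontriviallyNormedField 𝕜]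

theorem deriv_iterate_eq_prod {f : 𝕜 → 𝕜} (hf : Differentiable 𝕜 f) (n : ℕ) (z : 𝕜) :
    deriv f^[n] z = ∏ i ∈ range n, deriv f (f^[i] z) := by
  induction n with
  | zero => simp
  | succ n ih =>
    rw [iterate_succ', prod_range_succ, ← ih, deriv_comp z hf.differentiableAt
      (hf.iterate n).differentiableAt, mul_comm]

theorem deriv_iterate_swap_comp {U V : 𝕜 → 𝕜} (hU : Differentiable 𝕜 U)
    (hV : Differentiable 𝕜 V) {n : ℕ} {z : 𝕜} (hz : (U ∘ V)^[n] z = z) :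
    deriv (V ∘ U)^[n] (V z) = deriv (U ∘ V)^[n] z := by
  set z' : ℕ → 𝕜 := fun i => (U ∘ V)^[i] z
  have orbit (i : ℕ) : (V ∘ U)^[i] (V z) = V (z' i) :=
    ((semiconj_swap_comp U V).iterate_right i z).symm
  rw [deriv_iterate_eq_prod (hV.comp hU), deriv_iterate_eq_prod (hU.comp hV)]
  calc ∏ i ∈ range n, deriv (V ∘ U) ((V ∘ U)^[i] (V z))
      = ∏ i ∈ range n, deriv V (z' (i + 1)) * deriv U (V (z' i)) := by
        refine prod_congr rfl fun i _ => ?_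
        rw [orbit, deriv_comp _ hV.differentiableAt hU.differentiableAt]
        simp only [z', iterate_succ_apply', comp_apply]
    _ = (∏ i ∈ range n, deriv U (V (z' i))) * ∏ i ∈ range n, deriv V (z' i) := by
        rw [prod_mul_distrib, prod_range_shift_eq_of_apply_eq (fun i => deriv V (z' i))
          (by simp only [z', hz, iterate_zero_apply]), mul_comm]
    _ = ∏ i ∈ range n, deriv (U ∘ V) (z' i) := by
        rw [← prod_mul_distrib]
        exact prod_congr rfl fun i _ =>
          (deriv_comp _ hU.differentiableAt hV.differentiableAt).symm

def MultipliersCorrespond (A B : 𝕜 → 𝕜) : Prop :=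
  ∀ l : ℕ, 0 < l → ∃ φ : 𝕜 → 𝕜, BijOn φ (ptsOfMinimalPeriod A l) (ptsOfMinimalPeriod B l) ∧
    ∀ z ∈ ptsOfMinimalPeriod A l, deriv A^[l] z = deriv B^[l] (φ z)

namespace MultipliersCorrespond

theorem refl (A : 𝕜 → 𝕜) : MultipliersCorrespond A A :=
  fun _ _ => ⟨id, bijOn_id _, fun _ _ => rfl⟩

theorem symm {A B : 𝕜 → 𝕜} (h : MultipliersCorrespond A B) : MultipliersCorrespond B A := by
  intro l hl
  obtain ⟨φ, hφ, hmult⟩ := h l hl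
  have hinv := hφ.invOn_invFunOn
  refine ⟨invFunOn φ (ptsOfMinimalPeriod A l), hφ.symm hinv.symm, fun w hw => ?_⟩
  rw [hmult _ (hφ.surjOn.mapsTo_invFunOn hw), hinv.2 hw]

theorem trans {A B C : 𝕜 → 𝕜} (hAB : MultipliersCorrespond A B)
    (hBC : MultipliersCorrespond B C) : MultipliersCorrespond A C := by
  intro l hl
  obtain ⟨φ, hφ, hφmult⟩ := hAB l hl
  obtain ⟨ψ, hψ, hψmult⟩ := hBC l hl
  exact ⟨ψ ∘ φ, hψ.comp hφ, fun z hz => (hφmult z hz).trans (hψmult _ (hφ.mapsTo hz))⟩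

theorem equivalence : Equivalence (MultipliersCorrespond (𝕜 := 𝕜)) :=
  ⟨refl, symm, trans⟩

theorem comp_swap {U V : 𝕜 → 𝕜} (hU : Differentiable 𝕜 U) (hV : Differentiable 𝕜 V) :
    MultipliersCorrespond (U ∘ V) (V ∘ U) := fun _ hl =>
  ⟨V, bijOn_ptsOfMinimalPeriod_swap_comp hl, fun _ hz =>
    (deriv_iterate_swap_comp hU hV hz.1).symm⟩

end MultipliersCorrespond

end Multipliers

theorem stmt_5
    (Rel : (ℂ → ℂ) → (ℂ → ℂ) → Prop)
    (hRel : ∀ A B : ℂ → ℂ, Rel A B ↔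
      ∃ U V : ℂ → ℂ, Differentiable ℂ U ∧ Differentiable ℂ V ∧ A = U ∘ V ∧ B = V ∘ U)
    (A B : ℂ → ℂ) (h : Relation.EqvGen Rel A B) :
    ∀ l : ℕ, 1 ≤ l → ∃ φ : ℂ → ℂ,
      Set.BijOn φ
        {z : ℂ | A^[l] z = z ∧ Function.minimalPeriod A z = l}
        {z : ℂ | B^[l] z = z ∧ Function.minimalPeriod B z = l} ∧
      ∀ z ∈ {z : ℂ | A^[l] z = z ∧ Function.minimalPeriod A z = l},
        deriv (A^[l]) z = deriv (B^[l]) (φ z) := by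
  refine MultipliersCorrespond.equivalence.eqvGen_iff.mp (Relation.EqvGen.mono ?_ A B h)
  intro A B hAB
  obtain ⟨U, V, hU, hV, rfl, rfl⟩ := (hRel A B).mp hAB
  exact MultipliersCorrespond.comp_swap hU hV
end

section
/- Let α be a type and define a relation Rel on functions α → α by: Rel A B if and only if there exist U, V : α → α with A = U ∘ V and B = V ∘ U. If A and B are related by the equivalence relation generated by Rel (EqvGen Rel A B), then there exist functions X, Y : α → α such that A ∘ X = X ∘ B and B ∘ Y = Y ∘ A; that is, each of A and B is semiconjugate to the other. -/
theorem stmt_6 {α : Type*}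
    (Rel : (α → α) → (α → α) → Prop)
    (hRel : ∀ A B : α → α, Rel A B ↔ ∃ U V : α → α, A = U ∘ V ∧ B = V ∘ U)
    (A B : α → α) (h : Relation.EqvGen Rel A B) :
    ∃ X Y : α → α, A ∘ X = X ∘ B ∧ B ∘ Y = Y ∘ A := by
  induction h with
  | rel A B hr =>
      obtain ⟨U, V, hA, hB⟩ := (hRel A B).mp hr
      exact ⟨U, V, by subst hA hB; rfl, by subst hA hB; rfl⟩
  | refl A => exact ⟨id, id, rfl, rfl⟩
  | symm A B _ ih =>
      obtain ⟨X, Y, h1, h2⟩ := ih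
      exact ⟨Y, X, h2, h1⟩
  | trans A B C _ _ ih1 ih2 =>
      obtain ⟨X1, Y1, h1, h2⟩ := ih1
      obtain ⟨X2, Y2, h3, h4⟩ := ih2
      refine ⟨X1 ∘ X2, Y2 ∘ Y1, ?_, ?_⟩
      · calc A ∘ (X1 ∘ X2) = (A ∘ X1) ∘ X2 := rfl
          _ = X1 ∘ (B ∘ X2) := by rw [h1]; rfl
          _ = X1 ∘ X2 ∘ C := by rw [h3]
      · calc C ∘ (Y2 ∘ Y1) = (C ∘ Y2) ∘ Y1 := rfl
          _ = Y2 ∘ (B ∘ Y1) := by rw [h4]; rfl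
          _ = Y2 ∘ Y1 ∘ A := by rw [h2]
end

section
/- Let λ ∈ ℂ with λ ≠ 0 and λ ≠ 1, and let z ∈ ℂ with z ≠ 0, z ≠ 1, z ≠ λ. Set w = z + λ/z. Then w ≠ λ + 1 and (w² − 4λ)/(4(w − λ − 1)) = (z² − λ)²/(4·z·(z − 1)·(z − λ)). That is, the Lattès map L_λ(z) = (z² − λ)²/(4z(z−1)(z−λ)) admits the decomposition L_λ = C₁ ∘ D₁ with C₁(z) = (z² − 4λ)/(4(z − λ − 1)) and D₁(z) = z + λ/z. -/
section Joukowski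

variable {K : Type*} [Field K] {c z : K}

theorem add_div_self_sub_sub_one (hz : z ≠ 0) :
    z + c / z - c - 1 = (z - 1) * (z - c) / z := by
  field_simp
  ring

theorem add_div_self_sq_sub_four_mul (hz : z ≠ 0) :
    (z + c / z) ^ 2 - 4 * c = (z ^ 2 - c) ^ 2 / z ^ 2 := by
  field_simp
  ring

theorem add_div_self_sub_sub_one_ne_zero (hz0 : z ≠ 0) (hz1 : z ≠ 1) (hzc : z ≠ c) :
    z + c / z - c - 1 ≠ 0 := by
  rw [add_div_self_sub_sub_one hz0]
  exact div_ne_zero (mul_ne_zero (sub_ne_zero.2 hz1) (sub_ne_zero.2 hzc)) hz0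

end Joukowski

theorem stmt_8_general (lam : ℂ)
    (z : ℂ) (hz0 : z ≠ 0) (hz1 : z ≠ 1) (hzl : z ≠ lam) :
    (z + lam / z) ≠ lam + 1 ∧
    ((z + lam / z) ^ 2 - 4 * lam) / (4 * ((z + lam / z) - lam - 1)) =
      (z ^ 2 - lam) ^ 2 / (4 * z * (z - 1) * (z - lam)) := by
  refine ⟨fun h => add_div_self_sub_sub_one_ne_zero hz0 hz1 hzl (by rw [h]; ring), ?_⟩
  rw [add_div_self_sq_sub_four_mul hz0, add_div_self_sub_sub_one hz0]
  field_simp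

theorem stmt_8 (lam : ℂ) (h0 : lam ≠ 0) (h1 : lam ≠ 1)
    (z : ℂ) (hz0 : z ≠ 0) (hz1 : z ≠ 1) (hzl : z ≠ lam) :
    (z + lam / z) ≠ lam + 1 ∧
    ((z + lam / z) ^ 2 - 4 * lam) / (4 * ((z + lam / z) - lam - 1)) =
      (z ^ 2 - lam) ^ 2 / (4 * z * (z - 1) * (z - lam)) :=
  stmt_8_general lam z hz0 hz1 hzl
end

section
/- Let λ ∈ ℂ with λ ≠ 0 and λ ≠ 1, and let z ∈ ℂ with z ≠ 0, z ≠ 1, z ≠ λ. Set w = z + (1 − λ)/(z − 1). Then w + 1 − λ ≠ 0 and (w² + 2w + 1)/(4(w + 1 − λ)) = (z² − λ)²/(4·z·(z − 1)·(z − λ)). That is, the Lattès map L_λ(z) = (z² − λ)²/(4z(z−1)(z−λ)) admits the decomposition L_λ = C₂ ∘ D₂ with C₂(z) = (z² + 2z + 1)/(4(z + 1 − λ)) and D₂(z) = z + (1 − λ)/(z − 1). -/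
theorem stmt_9 (lam : ℂ) (h0 : lam ≠ 0) (h1 : lam ≠ 1)
    (z : ℂ) (hz0 : z ≠ 0) (hz1 : z ≠ 1) (hzl : z ≠ lam) :
    (z + (1 - lam) / (z - 1)) + 1 - lam ≠ 0 ∧
    ((z + (1 - lam) / (z - 1)) ^ 2 + 2 * (z + (1 - lam) / (z - 1)) + 1) /
        (4 * ((z + (1 - lam) / (z - 1)) + 1 - lam)) =
      (z ^ 2 - lam) ^ 2 / (4 * z * (z - 1) * (z - lam)) := by
  have hz1' : z - 1 ≠ 0 := sub_ne_zero.mpr hz1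
  have hzl' : z - lam ≠ 0 := sub_ne_zero.mpr hzl
  have key : (z + (1 - lam) / (z - 1)) + 1 - lam = z * (z - lam) / (z - 1) := by
    field_simp
    ring
  have hne : (z + (1 - lam) / (z - 1)) + 1 - lam ≠ 0 := by
    rw [key]
    exact div_ne_zero (mul_ne_zero hz0 hzl') hz1'
  refine ⟨hne, ?_⟩
  rw [key]
  field_simp
  ring
end

section
/- Let λ ∈ ℂ with λ ≠ 0 and λ ≠ 1, and let z ∈ ℂ with z ≠ 0, z ≠ 1, z ≠ λ. Set w = z + (λ² − λ)/(z − λ). Then w + λ − 1 ≠ 0 and (λ² + 2λw + w²)/(4(w + λ − 1)) = (z² − λ)²/(4·z·(z − 1)·(z − λ)). That is, the Lattès map L_λ(z) = (z² − λ)²/(4z(z−1)(z−λ)) admits the decomposition L_λ = C₃ ∘ D₃ with C₃(z) = (λ² + 2λz + z²)/(4(z + λ − 1)) and D₃(z) = z + (λ² − λ)/(z − λ). -/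
theorem stmt_10 (lam : ℂ) (h0 : lam ≠ 0) (h1 : lam ≠ 1)
    (z : ℂ) (hz0 : z ≠ 0) (hz1 : z ≠ 1) (hzl : z ≠ lam) :
    (z + (lam ^ 2 - lam) / (z - lam)) + lam - 1 ≠ 0 ∧
    (lam ^ 2 + 2 * lam * (z + (lam ^ 2 - lam) / (z - lam)) +
          (z + (lam ^ 2 - lam) / (z - lam)) ^ 2) /
        (4 * ((z + (lam ^ 2 - lam) / (z - lam)) + lam - 1)) =
      (z ^ 2 - lam) ^ 2 / (4 * z * (z - 1) * (z - lam)) := by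
  have hzl' : z - lam ≠ 0 := sub_ne_zero.mpr hzl
  have hz1' : z - 1 ≠ 0 := sub_ne_zero.mpr hz1
  have key : (z + (lam ^ 2 - lam) / (z - lam)) + lam - 1 = z * (z - 1) / (z - lam) := by
    field_simp
    ring
  constructor
  · rw [key]
    exact div_ne_zero (mul_ne_zero hz0 hz1') hzl'
  · rw [key]
    field_simp
    ring
end

section
/- Let λ ∈ ℂ with λ ≠ 0 and λ ≠ 1, and define D₁(z) = z + λ/z, D₂(z) = z + (1 − λ)/(z − 1), D₃(z) = z + (λ² − λ)/(z − λ). Then for every pair of distinct indices i, j ∈ {1, 2, 3}, there do not exist a, b, c, d ∈ ℂ with a·d − b·c ≠ 0 such that for all z ∈ ℂ with z ≠ 0, z ≠ 1 and z ≠ λ one has (c·D_i(z) + d)·D_j(z) = a·D_i(z) + b. In other words, no D_j is obtained from D_i (i ≠ j) by postcomposition with a Möbius transformation, so the three decompositions L_λ = C_i ∘ D_i of the Lattès map L_λ are pairwise non-equivalent. -/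
/-!
Each `D i` has the form `z + r / (z - p)` with pole `p ∈ {0, 1, λ}` and residue
`r ∈ {λ, 1 - λ, λ² - λ}`, so the poles are distinct and the residues nonzero. If
`(c f + d) g = a f + b` for `f = z + r / (z - p)`, `g = z + s / (z - q)` at infinitely many `z`,
clearing denominators gives the polynomial identity
`(c F + d (X - p)) G = (a F + b (X - p)) (X - q)` with `F = X (X - p) + r`, `G = X (X - q) + s`.
Comparing `X⁴`-coefficients gives `c = 0`, and evaluating at the pole `X = p` gives
`a r (p - q) = 0`, so `a = 0` and the Möbius matrix is singular.
-/

open Filter Polynomial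

theorem Polynomial.eq_zero_of_eventually_isRoot {K : Type*} [Field K] [Infinite K] {P : K[X]}
    (h : ∀ᶠ z in cofinite, P.IsRoot z) : P = 0 :=
  P.eq_zero_of_infinite_isRoot (frequently_cofinite_iff_infinite.mp h.frequently)

theorem det_eq_zero_of_eventually_mobius_relation {K : Type*} [Field K] [Infinite K]
    {p q r s a b c d : K} (hpq : p ≠ q) (hr : r ≠ 0)
    (h : ∀ᶠ z in cofinite,
      (c * (z + r / (z - p)) + d) * (z + s / (z - q)) = a * (z + r / (z - p)) + b) :
    a * d - b * c = 0 := by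
  set F : K[X] := X * (X - C p) + C r
  set G : K[X] := X * (X - C q) + C s
  have hP : (C c * F + C d * (X - C p)) * G = (C a * F + C b * (X - C p)) * (X - C q) := by
    rw [← sub_eq_zero]
    refine eq_zero_of_eventually_isRoot ?_
    filter_upwards [h, eventually_cofinite_ne p, eventually_cofinite_ne q] with z hz hzp hzq
    have hzp' : z - p ≠ 0 := sub_ne_zero.mpr hzp
    have hzq' : z - q ≠ 0 := sub_ne_zero.mpr hzq
    field_simp at hz
    simp only [IsRoot, F, G, eval_sub, eval_mul, eval_add, eval_C, eval_X]
    linear_combination hz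
  have hc : c = 0 := by
    simpa [F, G, mul_add, add_mul, sub_mul, mul_sub, coeff_X, coeff_C, ← pow_succ, mul_assoc]
      using congrArg (coeff · 4) hP
  have har : a * r * (p - q) = 0 := by
    have hPp := congrArg (eval p) hP
    simp only [F, G, eval_sub, eval_mul, eval_add, eval_C, eval_X, hc] at hPp
    linear_combination -hPp
  have ha : a = 0 := by simpa [hr, sub_eq_zero, hpq] using har
  simp [ha, hc]

theorem stmt_11 (lam : ℂ) (h0 : lam ≠ 0) (h1 : lam ≠ 1)
    (D : Fin 3 → ℂ → ℂ)
    (hD0 : ∀ z, D 0 z = z + lam / z)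
    (hD1 : ∀ z, D 1 z = z + (1 - lam) / (z - 1))
    (hD2 : ∀ z, D 2 z = z + (lam ^ 2 - lam) / (z - lam))
    (i j : Fin 3) (hij : i ≠ j) :
    ¬ ∃ a b c d : ℂ, a * d - b * c ≠ 0 ∧
      ∀ z : ℂ, z ≠ 0 → z ≠ 1 → z ≠ lam →
        (c * D i z + d) * D j z = a * D i z + b := by
  rintro ⟨a, b, c, d, hdet, h⟩
  set pole : Fin 3 → ℂ := ![0, 1, lam]
  set residue : Fin 3 → ℂ := ![lam, 1 - lam, lam ^ 2 - lam]
  have hD : ∀ k z, D k z = z + residue k / (z - pole k) := by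
    intro k z
    fin_cases k <;> simp [pole, residue, hD0, hD1, hD2]
  have hpole : pole i ≠ pole j := by
    fin_cases i <;> fin_cases j <;> simp_all [pole, eq_comm]
  have hresidue : residue i ≠ 0 := by
    fin_cases i <;> simp [residue, h0, h1, sub_eq_zero, h1.symm, sq, ← mul_sub_one]
  refine hdet (det_eq_zero_of_eventually_mobius_relation (s := residue j) hpole hresidue ?_)
  filter_upwards [eventually_cofinite_ne 0, eventually_cofinite_ne 1, eventually_cofinite_ne lam]
    with z hz0 hz1 hzlam
  simpa only [hD] using h z hz0 hz1 hzlam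
end
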